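/- arXiv:1709.03280 — 9 statements merged into one kernel-verified Lean document; each statement's English description precedes it below -/
import Mathlib

section
/- An N×N Hermitian complex matrix A whose entries all have modulus 0 or 1 and whose principal minors of size at most 3 are all non-negative is positive semidefinite. -/
/-!
The `1 × 1` and `2 × 2` minors force every diagonal entry to be `0` or `1`, and every row with
a zero diagonal entry to vanish. For unimodular `a = A i j`, `b = A j k`, `u = A i k` the
`3 × 3` principal minor on `{i, j, k}` equals `-|a b ū - 1|²`, so `A i k = A i j * A j k`
whenever `A i j ≠ 0` and `A j k ≠ 0`. Hence `A i j ≠ 0` is an equivalence relation, rows in the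
same class have the same support, and with `D = diag (1 / #supp(row i))` one gets
`A = A D A = A D Aᴴ`, which is positive semidefinite.
-/

open Matrix
open scoped ComplexOrder

/-- A Hermitian matrix is `k`-PMP if all its principal minors of size at most `k`
are non-negative (in the partial order on `ℂ`, i.e. real and non-negative). -/
def kPMP {N : ℕ} (k : ℕ) (A : Matrix (Fin N) (Fin N) ℂ) : Prop :=
  ∀ S : Finset (Fin N), S.card ≤ k →
    0 ≤ (A.submatrix (fun i : S => (i : Fin N)) (fun i : S => (i : Fin N))).det

open ComplexConjugate

namespace Complex

theorem eq_zero_of_nonneg_neg_mul_conj {z : ℂ} (h : 0 ≤ -(z * conj z)) : z = 0 := by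
  rw [mul_conj, ← ofReal_neg, zero_le_real] at h
  exact normSq_eq_zero.mp (le_antisymm (by linarith) (normSq_nonneg z))

theorem eq_mul_of_det_nonneg {a b u : ℂ} (ha : ‖a‖ = 1) (hb : ‖b‖ = 1)
    (h : 0 ≤ !![1, a, u; conj a, 1, b; conj u, conj b, 1].det) : u = a * b := by
  have haa : a * conj a = 1 := by rw [mul_conj, normSq_eq_norm_sq, ha]; norm_num
  have hbb : b * conj b = 1 := by rw [mul_conj, normSq_eq_norm_sq, hb]; norm_num
  set v := a * b * conj u
  have hdet : !![1, a, u; conj a, 1, b; conj u, conj b, 1].det = -((v - 1) * conj (v - 1)) := by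
    simp only [det_fin_three, of_apply, cons_val', cons_val_zero, cons_val_one, cons_val_two,
      empty_val', cons_val_fin_one, head_cons, head_fin_const, tail_cons, v, map_sub, map_mul,
      conj_conj, map_one]
    linear_combination (u * conj u - 1) * haa + (u * conj u * a * conj a - 1) * hbb
  rw [hdet] at h
  have hv : conj v = 1 := by
    rw [sub_eq_zero.mp (eq_zero_of_nonneg_neg_mul_conj h), map_one]
  simp only [v, map_mul, conj_conj] at hv
  linear_combination (-u * b * conj b) * haa - u * hbb + a * b * hv

end Complex

theorem Matrix.IsHermitian.apply_ne_zero_symm {n α : Type*} [AddMonoid α] [StarAddMonoid α]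
    {A : Matrix n n α} (hA : A.IsHermitian) {i j : n} (hij : A i j ≠ 0) : A j i ≠ 0 := by
  simpa [← hA.apply i j] using hij

noncomputable def rowSupport {N : ℕ} (A : Matrix (Fin N) (Fin N) ℂ) (i : Fin N) :
    Finset (Fin N) :=
  {l | A i l ≠ 0}

theorem mem_rowSupport {N : ℕ} {A : Matrix (Fin N) (Fin N) ℂ} {i l : Fin N} :
    l ∈ rowSupport A i ↔ A i l ≠ 0 := by
  simp [rowSupport]

namespace kPMP

variable {N k : ℕ} {A : Matrix (Fin N) (Fin N) ℂ}

theorem mono {j : ℕ} (h : kPMP k A) (hjk : j ≤ k) : kPMP j A :=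
  fun S hS => h S (hS.trans hjk)

theorem det_submatrix_nonneg (h : kPMP k A) {m : ℕ} (hm : m ≤ k) (f : Fin m → Fin N) :
    0 ≤ (A.submatrix f f).det := by
  by_cases hf : Function.Injective f
  · let S := Finset.univ.image f
    let e : Fin m ≃ S := (Equiv.ofInjective f hf).trans (Equiv.subtypeEquivRight (by simp [S]))
    have hS : S.card = m := by simp [S, Finset.card_image_of_injective _ hf]
    rw [show A.submatrix f f = (A.submatrix (↑) (↑) : Matrix S S ℂ).submatrix e e from rfl,
      det_submatrix_equiv_self]
    exact h S (hS ▸ hm)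
  · obtain ⟨a, b, hab, hne⟩ : ∃ a b, f a = f b ∧ a ≠ b := by
      simpa [Function.Injective] using hf
    rw [det_zero_of_row_eq hne (by ext; simp [hab])]

theorem diag_nonneg (h : kPMP 1 A) (i : Fin N) : 0 ≤ A i i := by
  have hdet := h.det_submatrix_nonneg le_rfl ![i]
  rwa [det_fin_one, submatrix_apply] at hdet

theorem diag_eq_zero_or_one (h : kPMP 1 A) {i : Fin N}
    (hi : ‖A i i‖ = 0 ∨ ‖A i i‖ = 1) : A i i = 0 ∨ A i i = 1 := by
  rw [← Complex.norm_of_nonneg' (h.diag_nonneg i)]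
  rcases hi with hi | hi <;> simp [hi]

theorem row_eq_zero_of_diag_eq_zero (hA : A.IsHermitian) (h : kPMP 2 A) {i : Fin N}
    (hi : A i i = 0) (j : Fin N) : A i j = 0 := by
  have hdet := h.det_submatrix_nonneg le_rfl ![i, j]
  simp only [det_fin_two, submatrix_apply, cons_val_zero, cons_val_one, hi, zero_mul,
    zero_sub, ← hA.apply j i, Complex.star_def] at hdet
  exact Complex.eq_zero_of_nonneg_neg_mul_conj hdet

variable (hA : A.IsHermitian) (h01 : ∀ i j, ‖A i j‖ = 0 ∨ ‖A i j‖ = 1) (h3 : kPMP 3 A)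
include hA h01 h3

theorem diag_eq_one_of_ne_zero {i j : Fin N} (hij : A i j ≠ 0) : A i i = 1 :=
  ((h3.mono (by norm_num)).diag_eq_zero_or_one (h01 i i)).resolve_left
    fun hi => hij ((h3.mono (by norm_num)).row_eq_zero_of_diag_eq_zero hA hi j)

theorem apply_eq_mul_of_ne_zero {i j k : Fin N} (hij : A i j ≠ 0) (hjk : A j k ≠ 0) :
    A i k = A i j * A j k := by
  have hdet := h3.det_submatrix_nonneg le_rfl ![i, j, k]
  have hsub : A.submatrix ![i, j, k] ![i, j, k] =
      !![1, A i j, A i k; conj (A i j), 1, A j k; conj (A i k), conj (A j k), 1] := by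
    have hii := diag_eq_one_of_ne_zero hA h01 h3 hij
    have hjj := diag_eq_one_of_ne_zero hA h01 h3 (hA.apply_ne_zero_symm hij)
    have hkk := diag_eq_one_of_ne_zero hA h01 h3 (hA.apply_ne_zero_symm hjk)
    ext a b
    fin_cases a <;> fin_cases b <;>
      simp [hii, hjj, hkk, ← hA.apply i j, ← hA.apply j k, ← hA.apply i k]
  rw [hsub] at hdet
  exact Complex.eq_mul_of_det_nonneg ((h01 i j).resolve_left (by simpa using hij))
    ((h01 j k).resolve_left (by simpa using hjk)) hdet

theorem mul_apply_eq_of_ne_zero {i j k : Fin N} (hij : A i j ≠ 0) : A i j * A j k = A i k := by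
  rcases eq_or_ne (A j k) 0 with hjk | hjk
  · have hik : A i k = 0 := by
      by_contra hik
      have hji := hA.apply_ne_zero_symm hij
      exact mul_ne_zero hji hik (apply_eq_mul_of_ne_zero hA h01 h3 hji hik ▸ hjk)
    rw [hjk, hik, mul_zero]
  · exact (apply_eq_mul_of_ne_zero hA h01 h3 hij hjk).symm

theorem rowSupport_eq_of_ne_zero {i j : Fin N} (hij : A i j ≠ 0) :
    rowSupport A i = rowSupport A j := by
  ext l
  simp only [mem_rowSupport, ← mul_apply_eq_of_ne_zero hA h01 h3 hij (k := l), mul_ne_zero_iff,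
    hij, ne_eq, not_false_eq_true, true_and]

theorem mul_diagonal_inv_card_rowSupport_mul_self :
    A * diagonal (fun i => ((rowSupport A i).card : ℂ)⁻¹) * A = A := by
  ext j k
  rw [mul_apply]
  simp only [mul_diagonal]
  calc ∑ i, A j i * ((rowSupport A i).card : ℂ)⁻¹ * A i k
      = ∑ i ∈ rowSupport A j, ((rowSupport A j).card : ℂ)⁻¹ * A j k := by
        rw [← Finset.sum_subset (Finset.subset_univ (rowSupport A j)) fun i _ hi => by
          rw [not_not.mp (mt mem_rowSupport.mpr hi), zero_mul, zero_mul]]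
        refine Finset.sum_congr rfl fun i hi => ?_
        have hji := mem_rowSupport.mp hi
        rw [← rowSupport_eq_of_ne_zero hA h01 h3 (hA.apply_ne_zero_symm hji),
          ← mul_apply_eq_of_ne_zero hA h01 h3 hji (k := k)]
        ring
    _ = A j k := by
        by_cases hjk : A j k = 0
        · simp [hjk]
        have hk : k ∈ rowSupport A j := mem_rowSupport.mpr hjk
        rw [Finset.sum_const, nsmul_eq_mul, ← mul_assoc,
          mul_inv_cancel₀ (by exact_mod_cast (Finset.card_pos.mpr ⟨k, hk⟩).ne'), one_mul]

end kPMP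

/-- An `N × N` Hermitian matrix whose entries all have modulus `0` or `1`, and
all of whose principal minors of size at most `3` are non-negative, is
positive semidefinite. -/
theorem stmt0 {N : ℕ} (A : Matrix (Fin N) (Fin N) ℂ) (hA : A.IsHermitian)
    (h01 : ∀ i j, ‖A i j‖ = 0 ∨ ‖A i j‖ = 1)
    (h3 : kPMP 3 A) : A.PosSemidef := by
  have hD : (diagonal fun i => ((rowSupport A i).card : ℂ)⁻¹).PosSemidef :=
    PosSemidef.diagonal fun i => by positivity
  have hADA := hD.mul_mul_conjTranspose_same A
  rwa [hA.eq, h3.mul_diagonal_inv_card_rowSupport_mul_self hA h01] at hADA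
end

section
/- Let A be an N×N Hermitian matrix all of whose entries have modulus exactly 1, and suppose every 3×3 principal minor of A is non-negative. Then A = u u* where u is the conjugate of the first row of A, i.e., a_{ij} = conj(a_{1i}) · a_{1j} for all i, j. In particular A has rank one. -/
open Matrix
open scoped ComplexOrder ComplexConjugate

/-!
For distinct `x, y, z` put `w = a_{xy} a_{yz} conj a_{xz}`. Expanding the principal minor on
`{x, y, z}` with unit diagonal and unimodular entries gives `w + conj w - 2 = 2 (Re w - 1)`.
Since `|w| = 1`, non-negativity forces `w = 1`, i.e. `a_{yz} = conj a_{xy} · a_{xz}`. Taking `x`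
to be the first index gives `A = u u*`, a nonzero matrix of rank at most one.
-/

namespace Complex

lemma conj_mul_self_of_norm_eq_one {z : ℂ} (hz : ‖z‖ = 1) : conj z * z = 1 := by
  rw [conj_mul', hz]; norm_num

lemma eq_one_of_norm_eq_one_of_one_le_re {w : ℂ} (hw : ‖w‖ = 1) (hre : 1 ≤ w.re) :
    w = 1 := by
  have hre_eq : w.re = 1 := le_antisymm (hw ▸ re_le_norm w) hre
  have hnonneg : 0 ≤ w := re_eq_norm.mp (by rw [hre_eq, hw])
  exact Complex.ext (by simpa using hre_eq) (by simpa using (le_def.mp hnonneg).2.symm)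

end Complex

namespace Matrix

variable {ι : Type*}

lemma det_fin_three_of_unimodular {B : Matrix (Fin 3) (Fin 3) ℂ} (hB : B.IsHermitian)
    (hdiag : ∀ i, B i i = 1) (hmod : ∀ i j, ‖B i j‖ = 1) :
    B.det = B 0 1 * B 1 2 * conj (B 0 2) + conj (B 0 1 * B 1 2 * conj (B 0 2)) - 2 := by
  have hherm : ∀ i j, B i j = conj (B j i) := fun i j => (hB.apply i j).symm
  have hunit : ∀ i j, conj (B i j) * B i j = 1 := fun i j =>
    Complex.conj_mul_self_of_norm_eq_one (hmod i j)
  rw [det_fin_three, hdiag, hdiag, hdiag, hherm 1 0, hherm 2 0, hherm 2 1]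
  simp only [map_mul, Complex.conj_conj]
  linear_combination -hunit 0 1 - hunit 0 2 - hunit 1 2

lemma apply_one_two_eq_of_det_nonneg {B : Matrix (Fin 3) (Fin 3) ℂ} (hB : B.IsHermitian)
    (hdiag : ∀ i, B i i = 1) (hmod : ∀ i j, ‖B i j‖ = 1) (hdet : 0 ≤ B.det) :
    B 1 2 = conj (B 0 1) * B 0 2 := by
  set w := B 0 1 * B 1 2 * conj (B 0 2) with hw_def
  have hre : 0 ≤ 2 * w.re - 2 := by
    have h := (Complex.le_def.mp hdet).1
    rw [det_fin_three_of_unimodular hB hdiag hmod] at h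
    simp only [Complex.zero_re, Complex.sub_re, Complex.add_re, Complex.conj_re,
      Complex.re_ofNat] at h
    linarith
  have hw_norm : ‖w‖ = 1 := by simp [hw_def, hmod]
  have hw : w = 1 := Complex.eq_one_of_norm_eq_one_of_one_le_re hw_norm (by linarith)
  have hunit : ∀ i j, conj (B i j) * B i j = 1 := fun i j =>
    Complex.conj_mul_self_of_norm_eq_one (hmod i j)
  linear_combination conj (B 0 1) * B 0 2 * hw - B 1 2 * hunit 0 1
    - B 1 2 * conj (B 0 1) * B 0 1 * hunit 0 2

lemma det_submatrix_coe_triple [DecidableEq ι] {R : Type*} [CommRing R] (A : Matrix ι ι R)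
    {x y z : ι} (hS : ({x, y, z} : Finset ι).card = 3) :
    (A.submatrix (fun i : ({x, y, z} : Finset ι) => (i : ι))
      (fun i : ({x, y, z} : Finset ι) => (i : ι))).det =
      (A.submatrix ![x, y, z] ![x, y, z]).det := by
  have hmem : ∀ k, ![x, y, z] k ∈ ({x, y, z} : Finset ι) := by
    intro k; fin_cases k <;> simp
  have hbij :
      Function.Bijective fun k => (⟨![x, y, z] k, hmem k⟩ : ({x, y, z} : Finset ι)) := by
    rw [Fintype.bijective_iff_surjective_and_card, Fintype.card_fin, Fintype.card_coe, hS]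
    refine ⟨fun ⟨i, hi⟩ => ?_, rfl⟩
    simp only [Finset.mem_insert, Finset.mem_singleton] at hi
    rcases hi with rfl | rfl | rfl
    exacts [⟨0, rfl⟩, ⟨1, rfl⟩, ⟨2, rfl⟩]
  rw [← det_submatrix_equiv_self (Equiv.ofBijective _ hbij)]
  rfl

lemma apply_eq_conj_mul_of_principal_minors_nonneg [DecidableEq ι] {A : Matrix ι ι ℂ}
    (hA : A.IsHermitian) (hdiag : ∀ i, A i i = 1) (hmod : ∀ i j, ‖A i j‖ = 1)
    (h3 : ∀ S : Finset ι, S.card = 3 →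
      0 ≤ (A.submatrix (fun i : S => (i : ι)) (fun i : S => (i : ι))).det)
    (o i j : ι) : A i j = conj (A o i) * A o j := by
  by_cases hij : i = j
  · subst hij
    rw [hdiag, Complex.conj_mul_self_of_norm_eq_one (hmod o i)]
  by_cases hi : o = i
  · subst hi
    rw [hdiag, map_one, one_mul]
  by_cases hj : o = j
  · subst hj
    rw [hdiag, mul_one, ← hA.apply i o]
    rfl
  have hS : ({o, i, j} : Finset ι).card = 3 :=
    Finset.card_eq_three.mpr ⟨o, i, j, hi, hj, hij, rfl⟩
  have hdet := h3 _ hS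
  rw [det_submatrix_coe_triple A hS] at hdet
  exact apply_one_two_eq_of_det_nonneg (hA.submatrix _) (fun k => hdiag _)
    (fun k l => hmod _ _) hdet

lemma rank_pos_of_ne_zero {m n K : Type*} [Fintype n] [DecidableEq n] [Field K] {A : Matrix m n K}
    (hA : A ≠ 0) : 0 < A.rank := by
  rw [Nat.pos_iff_ne_zero, rank, Ne, Submodule.finrank_eq_zero, LinearMap.range_eq_bot]
  refine fun h => hA (ext fun i j => ?_)
  simpa using congr_fun (LinearMap.congr_fun h (Pi.single j 1)) i

end Matrix

/-- Let `A` be an `N × N` Hermitian matrix all of whose entries have modulus `1`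
(and with unit diagonal), and suppose every `3 × 3` principal minor of `A` is
non-negative. Then `a_{ij} = conj (a_{1i}) * a_{1j}` for all `i, j`, i.e.
`A = u u*` with `u` the conjugate of the first row; in particular `A` has rank one. -/
theorem stmt2 {N : ℕ} (hN : 0 < N) (A : Matrix (Fin N) (Fin N) ℂ)
    (hA : A.IsHermitian)
    (hdiag : ∀ i, A i i = 1)
    (hmod : ∀ i j, ‖A i j‖ = 1)
    (h3 : ∀ S : Finset (Fin N), S.card = 3 →
      0 ≤ (A.submatrix (fun i : S => (i : Fin N)) (fun i : S => (i : Fin N))).det) :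
    (∀ i j, A i j = (starRingEnd ℂ) (A ⟨0, hN⟩ i) * A ⟨0, hN⟩ j) ∧ A.rank = 1 := by
  have hfactor := apply_eq_conj_mul_of_principal_minors_nonneg hA hdiag hmod h3 ⟨0, hN⟩
  refine ⟨hfactor, le_antisymm ?_ (rank_pos_of_ne_zero fun h0 => ?_)⟩
  · have hA_eq : A = vecMulVec (fun i => conj (A ⟨0, hN⟩ i)) (A ⟨0, hN⟩) := by
      ext i j
      exact hfactor i j
    exact hA_eq ▸ rank_vecMulVec_le _ _
  · simpa [h0] using hdiag ⟨0, hN⟩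
end

section
/- Every Hermitian positive semidefinite matrix M satisfies the principal submatrix rank property: for every subset S of indices, the column space of the rows of M indexed by S equals the column space of the principal submatrix M_{S×S}. -/
/-!
Factor `M = Bᴴ * B` and let `C = (B_{·,S})ᴴ`. Then `M_{S×·} = C * B` and `M_{S×S} = C * Cᴴ`, so
`range M_{S×·} ≤ range C`, while `C * Cᴴ` has the same rank as `C`, hence the same range.
The reverse inclusion holds for any matrix, since the columns of `M_{S×S}` are columns of `M_{S×·}`.
-/

open Matrix
open scoped ComplexOrder

namespace Matrix

variable {m n o R : Type*} [Fintype n]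

theorem range_mulVecLin_mul_le [CommSemiring R] [Fintype o] (A : Matrix m n R) (B : Matrix n o R) :
    LinearMap.range (A * B).mulVecLin ≤ LinearMap.range A.mulVecLin := by
  rw [mulVecLin_mul]
  exact LinearMap.range_comp_le_range _ _

theorem range_mulVecLin_submatrix_le [CommSemiring R] [Fintype o] {l : Type*} (A : Matrix l n R)
    (r : m → l) (c : o → n) :
    LinearMap.range (A.submatrix r c).mulVecLin ≤ LinearMap.range (A.submatrix r id).mulVecLin := by
  rw [range_mulVecLin, range_mulVecLin]
  exact Submodule.span_mono (Set.range_comp_subset_range c (A.submatrix r id).col)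

theorem range_mulVecLin_mul_conjTranspose_self [Fintype m] [Field R] [PartialOrder R] [StarRing R]
    [StarOrderedRing R] (A : Matrix m n R) :
    LinearMap.range (A * Aᴴ).mulVecLin = LinearMap.range A.mulVecLin :=
  Submodule.eq_of_le_of_finrank_le (range_mulVecLin_mul_le A Aᴴ)
    (rank_self_mul_conjTranspose A).ge

theorem PosSemidef.range_mulVecLin_submatrix_id [Fintype m] {𝕜 : Type*} [RCLike 𝕜]
    {M : Matrix n n 𝕜} (hM : M.PosSemidef) (e : m → n) :
    LinearMap.range (M.submatrix e id).mulVecLin = LinearMap.range (M.submatrix e e).mulVecLin := by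
  classical
  obtain ⟨B, rfl⟩ : ∃ B : Matrix n n 𝕜, M = Bᴴ * B := by
    open MatrixOrder in exact CStarAlgebra.nonneg_iff_eq_star_mul_self.mp hM.nonneg
  have hrows : (Bᴴ * B).submatrix e id = Bᴴ.submatrix e id * B := by
    rw [submatrix_mul _ _ e id id Function.bijective_id, submatrix_id_id]
  have hprincipal : (Bᴴ * B).submatrix e e = Bᴴ.submatrix e id * (Bᴴ.submatrix e id)ᴴ := by
    rw [submatrix_mul _ _ e id e Function.bijective_id, conjTranspose_submatrix,
      conjTranspose_conjTranspose]
  refine le_antisymm ?_ (range_mulVecLin_submatrix_le _ e e)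
  rw [hrows, hprincipal, range_mulVecLin_mul_conjTranspose_self]
  exact range_mulVecLin_mul_le _ B

end Matrix

/-- Every Hermitian positive semidefinite matrix satisfies the principal submatrix
rank property: for every index set `S`, the span of the columns of the rows of `M`
indexed by `S` (vectors in `ℂ^S`) equals the span of the columns of the principal
submatrix `M_{S×S}`. -/
theorem stmt5 {N : ℕ} (M : Matrix (Fin N) (Fin N) ℂ) (hM : M.PosSemidef)
    (S : Finset (Fin N)) :
    Submodule.span ℂ (Set.range fun j : Fin N => fun i : S => M (i : Fin N) j)
      = Submodule.span ℂ
          (Set.range fun j : S => fun i : S => M (i : Fin N) (j : Fin N)) := by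
  have hrange := hM.range_mulVecLin_submatrix_id ((↑) : S → Fin N)
  rwa [range_mulVecLin, range_mulVecLin] at hrange
end

section
/- If M is a k-PMP Hermitian matrix with 2 ≤ k ≤ N, written in block form M = [[A, B],[B*, C]] with A of size (k−1)×(k−1), then every column of B lies in the column space of A. -/
open Matrix
open scoped ComplexOrder

/-!
The rows `i < k - 1` together with the row `j` index a principal submatrix `P` of `M` of size
`k`, whose principal minors are principal minors of `M` of size at most `k`, hence nonnegative.
Such a Hermitian matrix is positive semidefinite: `det (1 + x • P)` is a polynomial in `x` whose
coefficients are sums of principal minors and whose constant term is `1`, so it is positive for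
`x ≥ 0`, whereas an eigenvalue `μ < 0` makes it vanish at `x = -1/μ`. Writing `P = B* B` and
letting `C` be the columns of `B` indexed by the leading block, that block is `A = C* C` and the
column `j` is `C* b` for the column `b` of `B`; since `C* C` and `C*` have the same rank, `C* b`
lies in the range of `A`.
-/

namespace Matrix

theorem det_submatrix_coe_finsetMap {R m n : Type*} [CommRing R] [DecidableEq m]
    [DecidableEq n] (M : Matrix n n R) (e : m ↪ n) (s : Finset m) :
    (M.submatrix ((↑) : s.map e → n) (↑)).det
      = ((M.submatrix e e).submatrix ((↑) : s → m) (↑)).det := by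
  rw [← det_submatrix_equiv_self (s.equivMap e)]
  rfl

theorem range_mulVecLin_conjTranspose_mul_self {m p R : Type*} [Fintype m] [Fintype p]
    [Field R] [PartialOrder R] [StarRing R] [StarOrderedRing R] (C : Matrix m p R) :
    LinearMap.range (Cᴴ * C).mulVecLin = LinearMap.range Cᴴ.mulVecLin := by
  refine Submodule.eq_of_le_of_finrank_le ?_ ?_
  · rw [mulVecLin_mul]
    exact LinearMap.range_comp_le_range _ _
  · change Cᴴ.rank ≤ (Cᴴ * C).rank
    rw [rank_conjTranspose_mul_self, rank_conjTranspose]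

variable {n : Type*} [Fintype n] [DecidableEq n]

open Polynomial in
theorem det_one_add_smul_pos {R : Type*} [CommRing R] [PartialOrder R] [IsStrictOrderedRing R]
    (M : Matrix n n R) (hM : ∀ s : Finset n, 0 ≤ (M.submatrix ((↑) : s → n) (↑)).det)
    {x : R} (hx : 0 ≤ x) : 0 < det (1 + x • M) := by
  set p : R[X] := det (1 + (X : R[X]) • M.map C)
  have hp : p.eval x = det (1 + x • M) := by
    rw [← coe_evalRingHom, RingHom.map_det]
    congr 1
    ext i j
    by_cases h : i = j <;> simp [h, mul_comm x]
  have hcoeff (k : ℕ) : p.coeff k = ∑ s ∈ Finset.univ.powersetCard k,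
      (M.submatrix (Subtype.val : s → n) Subtype.val).det :=
    coeff_det_one_add_X_smul_eq_sum_minors M k
  rw [← hp, eval_eq_sum_range]
  refine Finset.sum_pos' (fun k _ => mul_nonneg ?_ (pow_nonneg hx k)) ⟨0, by simp, ?_⟩
  · rw [hcoeff]
    exact Finset.sum_nonneg fun s _ => hM s
  · simp [hcoeff]

variable {𝕜 : Type*} [RCLike 𝕜]

theorem IsHermitian.posSemidef_of_minors_nonneg {P : Matrix n n 𝕜} (hP : P.IsHermitian)
    (hminors : ∀ s : Finset n, 0 ≤ (P.submatrix ((↑) : s → n) (↑)).det) : P.PosSemidef := by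
  refine hP.posSemidef_iff_eigenvalues_nonneg.mpr fun i => ?_
  by_contra! hneg
  set μ := hP.eigenvalues i
  replace hneg : μ < 0 := hneg
  set v := ⇑(hP.eigenvectorBasis i)
  have hv : v ≠ 0 := fun h =>
    hP.eigenvectorBasis.orthonormal.ne_zero i (WithLp.ofLp_injective 2 h)
  have hx : (0 : 𝕜) ≤ ((-μ⁻¹ : ℝ) : 𝕜) := RCLike.ofReal_nonneg.mpr (by simp [hneg.le])
  have hker : (1 + ((-μ⁻¹ : ℝ) : 𝕜) • P) *ᵥ v = 0 := by
    rw [add_mulVec, one_mulVec, smul_mulVec, hP.mulVec_eigenvectorBasis,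
      ← RCLike.real_smul_eq_coe_smul (K := 𝕜), smul_smul, neg_mul, inv_mul_cancel₀ hneg.ne,
      neg_one_smul, add_neg_cancel]
  exact (det_one_add_smul_pos P hminors hx).ne' (exists_mulVec_eq_zero_iff.mp ⟨v, hv, hker⟩)

open scoped MatrixOrder in
theorem PosSemidef.col_mem_span_cols_submatrix {m : Type*} [Fintype m] {P : Matrix n n 𝕜}
    (hP : P.PosSemidef) (f : m → n) (b : n) :
    (fun i => P (f i) b) ∈ Submodule.span 𝕜 (Set.range fun j i => P (f i) (f j)) := by
  obtain ⟨B, rfl⟩ := CStarAlgebra.nonneg_iff_eq_star_mul_self.mp hP.nonneg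
  set C := B.submatrix id f
  have hcol : (fun i => (star B * B) (f i) b) = Cᴴ *ᵥ fun r => B r b := by
    ext i
    simp [C, mulVec, dotProduct, mul_apply]
  change _ ∈ Submodule.span 𝕜 (Set.range (Cᴴ * C).col)
  rw [← range_mulVecLin, range_mulVecLin_conjTranspose_mul_self, hcol]
  exact LinearMap.mem_range_self _ _

end Matrix

theorem kPMP.posSemidef_submatrix {N k : ℕ} {M : Matrix (Fin N) (Fin N) ℂ} (hpmp : kPMP k M)
    (hM : M.IsHermitian) {m : Type*} [Fintype m] [DecidableEq m] (e : m ↪ Fin N)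
    (hm : Fintype.card m ≤ k) : (M.submatrix e e).PosSemidef := by
  refine (hM.submatrix e).posSemidef_of_minors_nonneg fun s => ?_
  rw [← det_submatrix_coe_finsetMap]
  exact hpmp _ (by simpa using s.card_le_univ.trans hm)

theorem stmt6_general {N k : ℕ} (hk : 2 ≤ k)
    (M : Matrix (Fin N) (Fin N) ℂ) (hM : M.IsHermitian) (hpmp : kPMP k M)
    (j : Fin N) (hj : k - 1 ≤ (j : ℕ)) :
    (fun i : {i : Fin N // (i : ℕ) < k - 1} => M (i : Fin N) j) ∈
      Submodule.span ℂ (Set.range fun j' : {i : Fin N // (i : ℕ) < k - 1} =>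
        fun i : {i : Fin N // (i : ℕ) < k - 1} => M (i : Fin N) (j' : Fin N)) := by
  set I := {i : Fin N // (i : ℕ) < k - 1}
  let e : I ⊕ Unit ↪ Fin N :=
    ⟨Sum.elim (↑) fun _ => j, Subtype.val_injective.sumElim (fun _ _ _ => rfl)
      fun i _ hij => by have := i.2; omega⟩
  have hcard : Fintype.card (I ⊕ Unit) ≤ k := by
    have hI : Fintype.card I ≤ k - 1 :=
      (Fintype.card_le_of_injective (fun i : I => (⟨i, i.2⟩ : Fin (k - 1))) fun _ _ h =>
        Subtype.ext (Fin.ext (Fin.mk.inj_iff.mp h))).trans_eq (Fintype.card_fin _)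
    rw [Fintype.card_sum, Fintype.card_unit]
    omega
  exact (hpmp.posSemidef_submatrix hM e hcard).col_mem_span_cols_submatrix Sum.inl (Sum.inr ())

/-- If `M` is a `k`-PMP Hermitian matrix (`2 ≤ k ≤ N`), written in block form
`M = [[A, B], [B*, C]]` with `A` the leading `(k−1) × (k−1)` principal submatrix,
then every column of `B` lies in the column space of `A`. -/
theorem stmt6 {N k : ℕ} (hk : 2 ≤ k) (hkN : k ≤ N)
    (M : Matrix (Fin N) (Fin N) ℂ) (hM : M.IsHermitian) (hpmp : kPMP k M)
    (j : Fin N) (hj : k - 1 ≤ (j : ℕ)) :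
    (fun i : {i : Fin N // (i : ℕ) < k - 1} => M (i : Fin N) j) ∈
      Submodule.span ℂ (Set.range fun j' : {i : Fin N // (i : ℕ) < k - 1} =>
        fun i : {i : Fin N // (i : ℕ) < k - 1} => M (i : Fin N) (j' : Fin N)) :=
  stmt6_general hk M hM hpmp j hj
end

section
/- For every 1 ≤ m ≤ l there exists a real symmetric positive semidefinite l×l matrix A of rank exactly m such that all p×p principal minors of A are strictly positive for 1 ≤ p ≤ m. -/
/-!
Take `A = V Vᵀ`, where `V` is the `l × m` Vandermonde matrix `(u_i ^ j)` with distinct nodes `u_i`,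
so that `A = ∑_{j<m} u^{∘j} (u^{∘j})ᵀ`. The principal submatrix of `A` on a set `S` of at most `m`
indices is the Gram matrix of the rows of `V` indexed by `S`; these rows are independent because
their first `|S|` columns form a non-singular square Vandermonde matrix, so the principal minor
is positive. Its rank is at most the width `m` of `V`, and at least the rank `m`
of any positive definite principal `m × m` submatrix.
-/

open Matrix Function

namespace Matrix

theorem vecMul_rectVandermonde_one_injective {ι K : Type*} [Fintype ι] [Field K] {u : ι → K}
    (hu : Injective u) {m : ℕ} (hm : Fintype.card ι ≤ m) :
    Injective (rectVandermonde u 1 m).vecMul := by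
  rw [← coe_vecMulLinear, injective_iff_map_eq_zero]
  intro x hx
  let e := Fintype.equivFin ι
  have hxe : x ∘ e.symm = 0 := by
    refine eq_zero_of_forall_pow_sum_mul_pow_eq_zero (hu.comp e.symm.injective) fun j => ?_
    have hj := congrFun hx (Fin.castLE hm j)
    simp only [coe_vecMulLinear, vecMul, dotProduct, rectVandermonde_apply, Pi.one_apply, one_pow,
      mul_one, Fin.val_castLE, Pi.zero_apply] at hj
    rw [← hj]
    exact e.symm.sum_comp fun i => x i * u i ^ (j : ℕ)
  funext i
  simpa using congrFun hxe (e i)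

theorem posDef_submatrix_rectVandermonde_mul_transpose {ι : Type*} {u : ι → ℝ}
    (hu : Injective u) {m : ℕ} {S : Finset ι} (hS : S.card ≤ m) :
    ((rectVandermonde u 1 m * (rectVandermonde u 1 m)ᵀ).submatrix ((↑) : S → ι) (↑)).PosDef := by
  rw [submatrix_mul _ _ _ id _ bijective_id, ← transpose_submatrix,
    ← conjTranspose_eq_transpose_of_trivial]
  exact .mul_conjTranspose_self _ <|
    vecMul_rectVandermonde_one_injective (hu.comp Subtype.val_injective) (by simpa using hS)

end Matrix

theorem stmt8_general (l m : ℕ) (hml : m ≤ l) :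
    ∃ A : Matrix (Fin l) (Fin l) ℝ, A.IsSymm ∧ A.PosSemidef ∧ A.rank = m ∧
      ∀ S : Finset (Fin l), S.Nonempty → S.card ≤ m →
        0 < (A.submatrix (fun i : S => (i : Fin l)) (fun i : S => (i : Fin l))).det := by
  let V := rectVandermonde (fun i : Fin l => ((i : ℕ) : ℝ)) 1 m
  have hu : Injective fun i : Fin l => ((i : ℕ) : ℝ) := Nat.cast_injective.comp Fin.val_injective
  have hprincipal (S : Finset (Fin l)) (hS : S.card ≤ m) :=
    posDef_submatrix_rectVandermonde_mul_transpose hu hS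
  refine ⟨V * Vᵀ, ?_, by simpa using posSemidef_self_mul_conjTranspose V, ?_,
    fun S _ hS => (hprincipal S hS).det_pos⟩
  · rw [IsSymm, transpose_mul, transpose_transpose]
  · obtain ⟨S, -, hS⟩ := (Finset.univ : Finset (Fin l)).exists_subset_card_eq
      (by simpa using hml)
    refine le_antisymm ((rank_mul_le_left _ _).trans (rank_le_width V)) ?_
    calc m = ((V * Vᵀ).submatrix ((↑) : S → Fin l) (↑) : Matrix S S ℝ).rank := by
          rw [rank_of_isUnit _ (hprincipal S hS.le).isUnit, Fintype.card_coe, hS]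
      _ ≤ (V * Vᵀ).rank := rank_submatrix_le _ _ _

/-- For every `1 ≤ m ≤ l` there exists a real symmetric positive semidefinite
`l × l` matrix `A` of rank exactly `m`, all of whose `p × p` principal minors are
strictly positive for `1 ≤ p ≤ m`. -/
theorem stmt8 (l m : ℕ) (hm : 1 ≤ m) (hml : m ≤ l) :
    ∃ A : Matrix (Fin l) (Fin l) ℝ, A.IsSymm ∧ A.PosSemidef ∧ A.rank = m ∧
      ∀ S : Finset (Fin l), S.Nonempty → S.card ≤ m →
        0 < (A.submatrix (fun i : S => (i : Fin l)) (fun i : S => (i : Fin l))).det :=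
  stmt8_general l m hml
end

section
/- Let B be a Hermitian (k+n₋)×(k+n₋) PSD matrix of rank k whose p×p principal minors are strictly positive for 1 ≤ p ≤ k, and let P be the orthogonal projection onto ker B. Then for all sufficiently small ε > 0, the matrix B − εP is k-PMP, has signature (k, 0, n₋), and every (k+1)×(k+1) principal minor of B − εP is negative. -/
open Matrix
open scoped ComplexOrder

/-!
For small `ε > 0`, every principal submatrix of `B - εP` of size at most `k` stays positive
definite: the corresponding submatrix of `B` is positive semidefinite with positive determinant,
hence positive definite, and `P ≤ 1`. The quadratic form of `B - εP` agrees with that of `B` on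
`range B`, where it is positive, and equals `-ε‖v‖²` on `ker B`; counting dimensions against the
eigenvalues gives the signature `(k, 0, n₋)`. A `(k+1) × (k+1)` principal submatrix contains a
positive definite `k × k` one, so it has at least `k` positive eigenvalues, and it has a negative
one because the corresponding submatrix of `B`, of rank at most `k`, kills a vector lying in
`ker B` once extended by zero. Hence its determinant is negative.
-/

open scoped MatrixOrder
open Filter Topology Finset

lemma card_filter_pos_add_card_filter_neg_add_card_filter_eq_zero {ι : Type*} [Fintype ι]
    (f : ι → ℝ) : #{i | 0 < f i} + #{i | f i < 0} + #{i | f i = 0} = Fintype.card ι := by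
  rw [card_filter, card_filter, card_filter, ← sum_add_distrib, ← sum_add_distrib, ← card_univ,
    card_eq_sum_ones]
  refine sum_congr rfl fun i _ => ?_
  rcases lt_trichotomy (f i) 0 with h | h | h
  · simp [h, h.not_gt, h.ne]
  · simp [h]
  · simp [h, h.not_gt, h.ne']

lemma LinearMap.finrank_le_card_of_forall_apply_eq_zero {n 𝕜 V : Type*} [Fintype n]
    [DivisionRing 𝕜] [AddCommGroup V] [Module 𝕜 V]
    (L : V →ₗ[𝕜] n → 𝕜) (W : Submodule 𝕜 V) (s : Finset n)
    (h : ∀ v ∈ W, (∀ i ∈ s, L v i = 0) → v = 0) :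
    Module.finrank 𝕜 W ≤ s.card := by
  let R : W →ₗ[𝕜] s → 𝕜 := LinearMap.funLeft 𝕜 𝕜 Subtype.val ∘ₗ L ∘ₗ W.subtype
  have hR : Function.Injective R := by
    rw [← LinearMap.ker_eq_bot, LinearMap.ker_eq_bot']
    intro v hv
    exact Subtype.ext <| h v v.2 fun i hi => congrFun hv ⟨i, hi⟩
  simpa using LinearMap.finrank_le_finrank_of_injective hR

namespace Matrix

section Extension

variable {m n R : Type*} [Fintype n] [DecidableEq n] [CommRing R] [StarRing R]

lemma conjTranspose_one_submatrix_mul_mul_one_submatrix (f : m → n) (A : Matrix n n R) :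
    ((1 : Matrix n n R).submatrix id f)ᴴ * A * (1 : Matrix n n R).submatrix id f =
      A.submatrix f f := by
  ext i j
  simp [mul_apply, one_apply]

lemma star_dotProduct_submatrix_mulVec [Fintype m] (f : m → n) (A : Matrix n n R) (x : m → R) :
    star x ⬝ᵥ A.submatrix f f *ᵥ x =
      star ((1 : Matrix n n R).submatrix id f *ᵥ x) ⬝ᵥ
        A *ᵥ ((1 : Matrix n n R).submatrix id f *ᵥ x) := by
  simp only [← conjTranspose_one_submatrix_mul_mul_one_submatrix f A, star_mulVec,
    dotProduct_mulVec, vecMul_vecMul]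

lemma mulVec_one_submatrix_injective [Fintype m] [DecidableEq m] {f : m → n}
    (hf : Function.Injective f) :
    Function.Injective ((1 : Matrix n n R).submatrix id f).mulVec := by
  set E := (1 : Matrix n n R).submatrix id f
  have hE : Eᴴ * E = 1 := by
    have := conjTranspose_one_submatrix_mul_mul_one_submatrix f (1 : Matrix n n R)
    rwa [Matrix.mul_one, submatrix_one f hf] at this
  intro x y h
  simpa only [mulVec_mulVec, hE, one_mulVec] using congrArg (Eᴴ *ᵥ ·) h

end Extension

section Spectral

variable {m n 𝕜 : Type*} [Fintype m] [Fintype n] [DecidableEq n] [RCLike 𝕜]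

lemma IsHermitian.star_dotProduct_mulVec_eq_sum {A : Matrix n n 𝕜} (hA : A.IsHermitian)
    (v : n → 𝕜) :
    star v ⬝ᵥ A *ᵥ v = ((∑ i, hA.eigenvalues i *
      ‖(star (hA.eigenvectorUnitary : Matrix n n 𝕜) *ᵥ v) i‖ ^ 2 : ℝ) : 𝕜) := by
  set U : Matrix n n 𝕜 := (hA.eigenvectorUnitary : Matrix n n 𝕜)
  have hstar : star v ᵥ* U = star (star U *ᵥ v) := by
    rw [star_mulVec, star_eq_conjTranspose, conjTranspose_conjTranspose]
  conv_lhs => rw [hA.spectral_theorem, Unitary.conjStarAlgAut_apply]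
  rw [← mulVec_mulVec, ← mulVec_mulVec, dotProduct_mulVec, hstar]
  simp only [dotProduct, mulVec_diagonal, Function.comp_apply, Pi.star_apply, RCLike.ofReal_sum,
    RCLike.ofReal_mul, RCLike.ofReal_pow]
  refine sum_congr rfl fun i _ => ?_
  rw [← RCLike.conj_mul, RCLike.star_def]
  ring

lemma IsHermitian.finrank_le_card_eigenvalues_pos {A : Matrix n n 𝕜} (hA : A.IsHermitian)
    (W : Submodule 𝕜 (n → 𝕜)) (hW : ∀ v ∈ W, v ≠ 0 → 0 < star v ⬝ᵥ A *ᵥ v) :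
    Module.finrank 𝕜 W ≤ #{i | 0 < hA.eigenvalues i} := by
  refine LinearMap.finrank_le_card_of_forall_apply_eq_zero
    (star (hA.eigenvectorUnitary : Matrix n n 𝕜)).mulVecLin W _ fun v hv hvanish => ?_
  by_contra hv0
  have hpos := hW v hv hv0
  rw [hA.star_dotProduct_mulVec_eq_sum, RCLike.ofReal_pos] at hpos
  refine hpos.not_ge <| sum_nonpos fun i _ => ?_
  by_cases hi : 0 < hA.eigenvalues i
  · have hi' : (star (hA.eigenvectorUnitary : Matrix n n 𝕜) *ᵥ v) i = 0 :=
      hvanish i (by simpa using hi)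
    simp [hi']
  · exact mul_nonpos_of_nonpos_of_nonneg (not_lt.1 hi) (by positivity)

lemma IsHermitian.finrank_le_card_eigenvalues_neg {A : Matrix n n 𝕜} (hA : A.IsHermitian)
    (W : Submodule 𝕜 (n → 𝕜)) (hW : ∀ v ∈ W, v ≠ 0 → star v ⬝ᵥ A *ᵥ v < 0) :
    Module.finrank 𝕜 W ≤ #{i | hA.eigenvalues i < 0} := by
  refine LinearMap.finrank_le_card_of_forall_apply_eq_zero
    (star (hA.eigenvectorUnitary : Matrix n n 𝕜)).mulVecLin W _ fun v hv hvanish => ?_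
  by_contra hv0
  have hneg := hW v hv hv0
  rw [hA.star_dotProduct_mulVec_eq_sum, RCLike.ofReal_lt_zero] at hneg
  refine hneg.not_ge <| sum_nonneg fun i _ => ?_
  by_cases hi : hA.eigenvalues i < 0
  · have hi' : (star (hA.eigenvectorUnitary : Matrix n n 𝕜) *ᵥ v) i = 0 :=
      hvanish i (by simpa using hi)
    simp [hi']
  · exact mul_nonneg (not_lt.1 hi) (by positivity)

lemma IsHermitian.card_le_card_eigenvalues_pos_of_posDef_submatrix {A : Matrix n n 𝕜}
    (hA : A.IsHermitian) [DecidableEq m] {f : m → n} (hf : Function.Injective f)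
    (h : (A.submatrix f f).PosDef) :
    Fintype.card m ≤ #{i | 0 < hA.eigenvalues i} := by
  set E := (1 : Matrix n n 𝕜).submatrix id f
  have hE : Function.Injective E.mulVecLin := mulVec_one_submatrix_injective hf
  have := hA.finrank_le_card_eigenvalues_pos (LinearMap.range E.mulVecLin) ?_
  · rwa [LinearMap.finrank_range_of_inj hE, Module.finrank_fintype_fun_eq_card] at this
  rintro _ ⟨x, rfl⟩ hx
  rw [mulVecLin_apply, ← star_dotProduct_submatrix_mulVec]
  exact h.dotProduct_mulVec_pos fun hx0 => hx (by simp [hx0])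

lemma IsHermitian.exists_eigenvalues_neg {A : Matrix n n 𝕜} (hA : A.IsHermitian) {x : n → 𝕜}
    (hx : star x ⬝ᵥ A *ᵥ x < 0) : ∃ i, hA.eigenvalues i < 0 := by
  by_contra! h
  have hA' : A.PosSemidef := hA.posSemidef_iff_eigenvalues_nonneg.2 h
  exact (hA'.dotProduct_mulVec_nonneg x).not_gt hx

lemma IsHermitian.det_neg_of_eigenvalues_neg {A : Matrix n n 𝕜} (hA : A.IsHermitian)
    (hpos : Fintype.card n ≤ #{i | 0 < hA.eigenvalues i} + 1) {i : n}
    (hi : hA.eigenvalues i < 0) :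
    A.det < 0 := by
  have hrest : ({j | 0 < hA.eigenvalues j} : Finset n) = univ.erase i := by
    refine eq_of_subset_of_card_le (fun j hj => mem_erase.2 ⟨?_, mem_univ j⟩) ?_
    · rintro rfl
      exact (mem_filter.1 hj).2.not_gt hi
    · rw [card_erase_of_mem (mem_univ i), card_univ]
      omega
  have hprod : ∏ j, hA.eigenvalues j < 0 := by
    rw [← mul_prod_erase univ _ (mem_univ i), ← hrest]
    exact mul_neg_of_neg_of_pos hi (prod_pos fun j hj => (mem_filter.1 hj).2)
  rw [hA.det_eq_prod_eigenvalues, ← RCLike.ofReal_prod]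
  exact RCLike.ofReal_lt_zero.2 hprod

lemma PosDef.eventually_posDef_sub_smul {A Q : Matrix n n 𝕜} (hA : A.PosDef) (hQ : Q ≤ 1) :
    ∀ᶠ ε : ℝ in 𝓝[>] 0, (A - (ε : 𝕜) • Q).PosDef := by
  rcases isEmpty_or_nonempty n with hn | hn
  · exact Eventually.of_forall fun ε => .of_dotProduct_mulVec_pos (Subsingleton.elim _ _)
      fun x hx => (hx (Subsingleton.elim _ _)).elim
  obtain ⟨r, hr, hrA⟩ : ∃ r > 0, algebraMap ℝ (Matrix n n 𝕜) r ≤ A := by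
    rw [CFC.exists_pos_algebraMap_le_iff hA.isHermitian]
    exact fun x hx => hA.isStrictlyPositive.spectrum_pos (𝕜 := ℝ) hx
  filter_upwards [Ioo_mem_nhdsGT hr] with ε ⟨hε, hεr⟩
  have hsplit : A - (ε : 𝕜) • Q = (A - algebraMap ℝ _ r) + (ε : 𝕜) • (1 - Q) +
      ((r - ε : ℝ) : 𝕜) • 1 := by
    rw [Algebra.algebraMap_eq_smul_one, RCLike.real_smul_eq_coe_smul (K := 𝕜), RCLike.ofReal_sub]
    module
  rw [hsplit]
  refine PosDef.posSemidef_add ?_ (PosDef.one.smul (by simpa using hεr))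
  exact (le_iff.1 hrA).add ((le_iff.1 hQ).smul (by simpa using hε.le))

lemma IsHermitian.le_one_of_mul_self_eq {P : Matrix n n 𝕜} (hP : P.IsHermitian) (hP2 : P * P = P) :
    P ≤ 1 := by
  have h : (1 - P)ᴴ * (1 - P) = 1 - P := by
    rw [conjTranspose_sub, conjTranspose_one, hP.eq, sub_mul, one_mul, mul_sub, mul_one, hP2,
      sub_self, sub_zero]
  rw [le_iff, ← h]
  exact posSemidef_conjTranspose_mul_self _

end Spectral

section Perturbation

variable {ι m 𝕜 : Type*} [RCLike 𝕜] {B P : Matrix ι ι 𝕜}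

lemma isHermitian_sub_smul (hB : B.IsHermitian) (hP : P.IsHermitian) (ε : ℝ) :
    (B - (ε : 𝕜) • P).IsHermitian :=
  hB.sub (hP.smul (RCLike.conj_ofReal ε))

variable [Fintype ι]

lemma mul_eq_zero_of_forall_mulVec_eq_zero_iff [DecidableEq ι] (hB : B.IsHermitian)
    (hP : P.IsHermitian) (hP2 : P * P = P) (hPker : ∀ v, B *ᵥ v = 0 ↔ P *ᵥ v = v) : P * B = 0 := by
  have hBP : B * P = 0 := ext_of_mulVec_single fun j => by
    rw [← mulVec_mulVec, zero_mulVec]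
    exact (hPker _).2 (by rw [mulVec_mulVec, hP2])
  rw [← hP.eq, ← hB.eq, ← conjTranspose_mul, hBP, conjTranspose_zero]

lemma star_dotProduct_sub_smul_mulVec_neg (hPker : ∀ v, B *ᵥ v = 0 ↔ P *ᵥ v = v) {ε : ℝ}
    (hε : 0 < ε) {v : ι → 𝕜} (hv : v ≠ 0) (hBv : B *ᵥ v = 0) :
    star v ⬝ᵥ (B - (ε : 𝕜) • P) *ᵥ v < 0 := by
  rw [sub_mulVec, smul_mulVec, hBv, (hPker v).1 hBv, zero_sub, dotProduct_neg, dotProduct_smul,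
    smul_eq_mul, neg_neg_iff_pos]
  exact mul_pos (RCLike.ofReal_pos.2 hε) (dotProduct_star_self_pos_iff.2 hv)

lemma star_dotProduct_sub_smul_mulVec_pos (hB : B.PosSemidef) (hPB : P * B = 0)
    (hPker : ∀ v, B *ᵥ v = 0 ↔ P *ᵥ v = v) (ε : ℝ) {w : ι → 𝕜} (hw : B *ᵥ w ≠ 0) :
    0 < star (B *ᵥ w) ⬝ᵥ (B - (ε : 𝕜) • P) *ᵥ (B *ᵥ w) := by
  have hPw : P *ᵥ (B *ᵥ w) = 0 := by rw [mulVec_mulVec, hPB, zero_mulVec]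
  rw [sub_mulVec, smul_mulVec, hPw, smul_zero, sub_zero]
  refine (hB.dotProduct_mulVec_nonneg _).lt_of_ne' fun h => hw ?_
  rw [← (hPker _).1 ((hB.dotProduct_mulVec_zero_iff _).1 h), hPw]

lemma rank_le_card_eigenvalues_pos_sub_smul [DecidableEq ι] (hB : B.PosSemidef)
    (hP : P.IsHermitian) (hP2 : P * P = P) (hPker : ∀ v, B *ᵥ v = 0 ↔ P *ᵥ v = v) (ε : ℝ)
    (hM : (B - (ε : 𝕜) • P).IsHermitian) : B.rank ≤ #{i | 0 < hM.eigenvalues i} := by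
  have hPB := mul_eq_zero_of_forall_mulVec_eq_zero_iff hB.1 hP hP2 hPker
  refine hM.finrank_le_card_eigenvalues_pos (LinearMap.range B.mulVecLin) ?_
  rintro _ ⟨w, rfl⟩ hw
  exact star_dotProduct_sub_smul_mulVec_pos hB hPB hPker ε hw

lemma finrank_ker_le_card_eigenvalues_neg_sub_smul [DecidableEq ι]
    (hPker : ∀ v, B *ᵥ v = 0 ↔ P *ᵥ v = v) {ε : ℝ} (hε : 0 < ε)
    (hM : (B - (ε : 𝕜) • P).IsHermitian) :
    Module.finrank 𝕜 (LinearMap.ker B.mulVecLin) ≤ #{i | hM.eigenvalues i < 0} :=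
  hM.finrank_le_card_eigenvalues_neg _ fun _ hv hv0 =>
    star_dotProduct_sub_smul_mulVec_neg hPker hε hv0 hv

lemma exists_star_dotProduct_submatrix_sub_smul_mulVec_neg [DecidableEq ι] [Fintype m]
    [DecidableEq m] (hB : B.PosSemidef) (hPker : ∀ v, B *ᵥ v = 0 ↔ P *ᵥ v = v) {ε : ℝ}
    (hε : 0 < ε) {f : m → ι} (hf : Function.Injective f) (hrank : B.rank < Fintype.card m) :
    ∃ x, star x ⬝ᵥ (B - (ε : 𝕜) • P).submatrix f f *ᵥ x < 0 := by
  have hdet : (B.submatrix f f).det = 0 := by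
    by_contra h
    have := rank_of_isUnit _ ((isUnit_iff_isUnit_det _).2 (Ne.isUnit h))
    have := rank_submatrix_le B f f
    omega
  obtain ⟨x, hx, hBx⟩ := exists_mulVec_eq_zero_iff.2 hdet
  set E := (1 : Matrix ι ι 𝕜).submatrix id f
  have hEx : E *ᵥ x ≠ 0 := fun h =>
    hx (mulVec_one_submatrix_injective hf (by rw [h, mulVec_zero]))
  have hBEx : B *ᵥ (E *ᵥ x) = 0 := by
    rw [← hB.dotProduct_mulVec_zero_iff, ← star_dotProduct_submatrix_mulVec, hBx, dotProduct_zero]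
  refine ⟨x, ?_⟩
  rw [star_dotProduct_submatrix_mulVec]
  exact star_dotProduct_sub_smul_mulVec_neg hPker hε hEx hBEx

lemma eventually_forall_posDef_submatrix_sub_smul [DecidableEq ι] (hB : B.PosSemidef)
    (hP : P.IsHermitian) (hP2 : P * P = P) {k : ℕ} (hminors : ∀ S : Finset ι, S.Nonempty → #S ≤ k →
      0 < (B.submatrix (fun i : S => (i : ι)) (fun i : S => (i : ι))).det) :
    ∀ᶠ ε : ℝ in 𝓝[>] 0, ∀ S : Finset ι, #S ≤ k →
      ((B - (ε : 𝕜) • P).submatrix (fun i : S => (i : ι)) (fun i : S => (i : ι))).PosDef := by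
  refine eventually_all.2 fun S => ?_
  by_cases hS : #S ≤ k
  swap
  · exact Eventually.of_forall fun _ h => (hS h).elim
  have hBS : (B.submatrix (fun i : S => (i : ι)) (fun i : S => (i : ι))).PosDef := by
    refine (hB.submatrix _).posDef_iff_det_ne_zero.2 ?_
    rcases S.eq_empty_or_nonempty with rfl | hne
    · simp
    · exact (hminors S hne hS).ne'
  have hPS : P.submatrix (fun i : S => (i : ι)) (fun i : S => (i : ι)) ≤ 1 := by
    have h1 : (1 : Matrix S S 𝕜) = (1 : Matrix ι ι 𝕜).submatrix (↑) (↑) :=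
      (submatrix_one _ Subtype.val_injective).symm
    rw [le_iff, h1]
    exact (le_iff.1 (hP.le_one_of_mul_self_eq hP2)).submatrix _
  filter_upwards [hBS.eventually_posDef_sub_smul hPS] with ε hε _
  exact hε

lemma det_submatrix_sub_smul_neg [DecidableEq ι] (hB : B.PosSemidef) (hP : P.IsHermitian)
    (hPker : ∀ v, B *ᵥ v = 0 ↔ P *ᵥ v = v) {ε : ℝ} (hε : 0 < ε) {k : ℕ} (hrank : B.rank ≤ k)
    (hPD : ∀ T : Finset ι, #T ≤ k →
      ((B - (ε : 𝕜) • P).submatrix (fun i : T => (i : ι)) (fun i : T => (i : ι))).PosDef)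
    (S : Finset ι) (hS : #S = k + 1) :
    ((B - (ε : 𝕜) • P).submatrix (fun i : S => (i : ι)) (fun i : S => (i : ι))).det < 0 := by
  have hMS := (isHermitian_sub_smul hB.1 hP ε).submatrix (fun i : S => (i : ι))
  obtain ⟨T, hTS, hT⟩ := exists_subset_card_eq (show k ≤ #S by omega)
  have hpos := hMS.card_le_card_eigenvalues_pos_of_posDef_submatrix
    (f := fun i : T => (⟨i, hTS i.2⟩ : S))
    (Function.Injective.of_comp (f := ((↑) : S → ι)) Subtype.val_injective) (hPD T hT.le)
  obtain ⟨x, hx⟩ := exists_star_dotProduct_submatrix_sub_smul_mulVec_neg hB hPker hε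
    (f := fun i : S => (i : ι)) Subtype.val_injective (by rw [Fintype.card_coe]; omega)
  obtain ⟨i, hi⟩ := hMS.exists_eigenvalues_neg hx
  rw [Fintype.card_coe, hT] at hpos
  exact hMS.det_neg_of_eigenvalues_neg (by rw [Fintype.card_coe]; omega) hi

end Perturbation

end Matrix

/-- Let `B` be a Hermitian PSD `(k + n₋) × (k + n₋)` matrix of rank `k` whose
principal minors of size at most `k` are strictly positive, and let `P` be the
orthogonal projection onto `ker B` (a Hermitian idempotent whose fixed vectors
are exactly the kernel of `B`). Then for all sufficiently small `ε > 0`, the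
matrix `B − ε P` is `k`-PMP, has signature `(k, 0, n₋)`, and all of its
`(k+1) × (k+1)` principal minors are negative. -/
theorem stmt11 {k nm : ℕ} (B P : Matrix (Fin (k + nm)) (Fin (k + nm)) ℂ)
    (hB : B.PosSemidef) (hrank : B.rank = k)
    (hminors : ∀ S : Finset (Fin (k + nm)), S.Nonempty → S.card ≤ k →
      0 < (B.submatrix (fun i : S => (i : Fin (k + nm)))
            (fun i : S => (i : Fin (k + nm)))).det)
    (hP : P.IsHermitian) (hP2 : P * P = P)
    (hPker : ∀ v : Fin (k + nm) → ℂ, B.mulVec v = 0 ↔ P.mulVec v = v) :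
    ∃ ε₀ : ℝ, 0 < ε₀ ∧ ∀ ε : ℝ, 0 < ε → ε < ε₀ →
      kPMP k (B - (ε : ℂ) • P) ∧
      (∃ hM : (B - (ε : ℂ) • P).IsHermitian,
        (Finset.univ.filter fun i => 0 < hM.eigenvalues i).card = k ∧
        (Finset.univ.filter fun i => hM.eigenvalues i = 0).card = 0 ∧
        (Finset.univ.filter fun i => hM.eigenvalues i < 0).card = nm) ∧
      ∀ S : Finset (Fin (k + nm)), S.card = k + 1 →
        ((B - (ε : ℂ) • P).submatrix (fun i : S => (i : Fin (k + nm)))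
          (fun i : S => (i : Fin (k + nm)))).det < 0 := by
  obtain ⟨ε₀, hε₀, hsmall⟩ := (nhdsGT_basis (0 : ℝ)).eventually_iff.1
    (eventually_forall_posDef_submatrix_sub_smul hB hP hP2 hminors)
  refine ⟨ε₀, hε₀, fun ε hε hεε₀ => ?_⟩
  have hPD := hsmall ⟨hε, hεε₀⟩
  have hM := isHermitian_sub_smul hB.1 hP ε
  have hpos := rank_le_card_eigenvalues_pos_sub_smul hB hP hP2 hPker ε hM
  have hneg := finrank_ker_le_card_eigenvalues_neg_sub_smul hPker hε hM
  have hker : B.rank + Module.finrank ℂ (LinearMap.ker B.mulVecLin) = k + nm := by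
    rw [Matrix.rank, LinearMap.finrank_range_add_finrank_ker, Module.finrank_fin_fun]
  have htotal := card_filter_pos_add_card_filter_neg_add_card_filter_eq_zero hM.eigenvalues
  rw [Fintype.card_fin] at htotal
  refine ⟨fun S hS => (hPD S hS).det_pos.le, ⟨hM, by omega, by omega, by omega⟩,
    det_submatrix_sub_smul_neg hB hP hPker hε hrank.le hPD⟩
end

section
/- Fix a multiplicative subgroup G ⊆ ℂ× and a Hermitian matrix A ∈ ℂ^{N×N}. There exists a coarsest partition π of {1,...,N} such that for every pair of blocks I, J of π, all entries of the submatrix A_{I×J} lie in a single G-orbit; this coarsest partition is unique. -/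
open Matrix

/-- `a` and `b` lie in the same orbit of the multiplicative subgroup `G ⊆ ℂˣ`. -/
def SameGOrbit (G : Subgroup ℂˣ) (a b : ℂ) : Prop := ∃ g ∈ G, a = (g : ℂˣ) * b

/-- A partition of the index set (encoded as a setoid) has the orbit property for
`A` if, for every pair of blocks `I, J`, all entries of the submatrix `A_{I×J}`
lie in a single `G`-orbit. -/
def OrbitPartition {N : ℕ} (G : Subgroup ℂˣ) (A : Matrix (Fin N) (Fin N) ℂ)
    (s : Setoid (Fin N)) : Prop :=
  ∀ i i' j j' : Fin N, s.r i i' → s.r j j' → SameGOrbit G (A i j) (A i' j')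

lemma SameGOrbit.refl (G : Subgroup ℂˣ) (a : ℂ) : SameGOrbit G a a :=
  ⟨1, G.one_mem, by simp⟩

lemma SameGOrbit.symm {G : Subgroup ℂˣ} {a b : ℂ} (h : SameGOrbit G a b) : SameGOrbit G b a := by
  obtain ⟨g, hg, rfl⟩ := h
  exact ⟨g⁻¹, G.inv_mem hg, by simp [mul_assoc, ← Units.val_mul]⟩

lemma SameGOrbit.trans {G : Subgroup ℂˣ} {a b c : ℂ} (h : SameGOrbit G a b)
    (h' : SameGOrbit G b c) : SameGOrbit G a c := by
  obtain ⟨g, hg, rfl⟩ := h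
  obtain ⟨g', hg', rfl⟩ := h'
  exact ⟨g * g', G.mul_mem hg hg', by simp [mul_assoc]⟩

/-- For a multiplicative subgroup `G ⊆ ℂˣ` and a Hermitian matrix `A`, there is a
unique coarsest partition of `{1, …, N}` such that all entries of each block
submatrix `A_{I×J}` lie in a single `G`-orbit: a unique setoid with the orbit
property which is coarser than every setoid with the orbit property. -/
theorem stmt13 {N : ℕ} (G : Subgroup ℂˣ) (A : Matrix (Fin N) (Fin N) ℂ)
    (hA : A.IsHermitian) :
    ∃! s : Setoid (Fin N), OrbitPartition G A s ∧
      ∀ t : Setoid (Fin N), OrbitPartition G A t → t ≤ s := by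
  set S : Set (Setoid (Fin N)) := {t | OrbitPartition G A t}
  set s := sSup S with hs
  have hkey : OrbitPartition G A s := by
    have hrel : ∀ i i', s.r i i' →
        (∀ j, SameGOrbit G (A i j) (A i' j)) ∧ (∀ j, SameGOrbit G (A j i) (A j i')) := by
      intro i i' h
      rw [hs, Setoid.sSup_eq_eqvGen] at h
      induction h with
      | rel x y hxy =>
          obtain ⟨r, hr, hxy⟩ := hxy
          exact ⟨fun j => hr x y j j hxy (r.refl j), fun j => hr j j x y (r.refl j) hxy⟩
      | refl x => exact ⟨fun j => SameGOrbit.refl G _, fun j => SameGOrbit.refl G _⟩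
      | symm x y _ ih => exact ⟨fun j => (ih.1 j).symm, fun j => (ih.2 j).symm⟩
      | trans x y z _ _ ih1 ih2 =>
          exact ⟨fun j => (ih1.1 j).trans (ih2.1 j), fun j => (ih1.2 j).trans (ih2.2 j)⟩
    intro i i' j j' hi hj
    exact ((hrel i i' hi).1 j).trans ((hrel j j' hj).2 i')
  refine ⟨s, ⟨hkey, fun t ht => le_sSup ht⟩, ?_⟩
  rintro t ⟨ht, htc⟩
  exact le_antisymm (le_sSup (show t ∈ S from ht)) (htc s hkey)
end

section
/- Let 𝔽 be a field and A ∈ 𝔽^{N×N} a matrix such that a_{ii} ≠ a_{ij} whenever 1 ≤ i < j ≤ N. Then the intersection of the kernels of the Hadamard (entrywise) powers A^{∘0}, A^{∘1}, ..., A^{∘(N−1)} is {0}, where A^{∘0} is the all-ones matrix. -/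
open Matrix Polynomial Finset

/-- Let `𝔽` be a field and `A` an `N × N` matrix over `𝔽` with `a_{ii} ≠ a_{ij}`
whenever `i < j`. Then the intersection of the kernels of the Hadamard powers
`A^{∘0}, …, A^{∘(N−1)}` (with `A^{∘0}` the all-ones matrix) is trivial. -/
theorem stmt15 {𝔽 : Type*} [Field 𝔽] {N : ℕ} (A : Matrix (Fin N) (Fin N) 𝔽)
    (h : ∀ i j : Fin N, i < j → A i i ≠ A i j)
    (v : Fin N → 𝔽)
    (hv : ∀ n : ℕ, n < N → (Matrix.of fun i j => (A i j) ^ n).mulVec v = 0) :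
    v = 0 := by
  have key : ∀ (i : Fin N) (p : 𝔽[X]), p.natDegree < N →
      ∑ j, p.eval (A i j) * v j = 0 := by
    intro i p hp
    have hev : ∀ j, p.eval (A i j) = ∑ n ∈ Finset.range N, p.coeff n * (A i j) ^ n := by
      intro j; exact Polynomial.eval_eq_sum_range' hp _
    have hmom : ∀ n : ℕ, n < N → ∑ j, (A i j) ^ n * v j = 0 := by
      intro n hn
      have := congrFun (hv n hn) i
      simpa [Matrix.mulVec, dotProduct] using this
    calc ∑ j, p.eval (A i j) * v j
        = ∑ j, ∑ n ∈ Finset.range N, p.coeff n * ((A i j) ^ n * v j) := by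
          simp_rw [hev, Finset.sum_mul, mul_assoc]
      _ = ∑ n ∈ Finset.range N, p.coeff n * ∑ j, (A i j) ^ n * v j := by
          rw [Finset.sum_comm]; simp_rw [Finset.mul_sum]
      _ = 0 := by
          apply Finset.sum_eq_zero
          intro n hn
          rw [hmom n (Finset.mem_range.mp hn), mul_zero]
  have main : ∀ m : ℕ, ∀ i : Fin N, i.val = m → v i = 0 := by
    intro m
    induction m using Nat.strong_induction_on with
    | _ m IHm =>
      intro i him
      have IH : ∀ j : Fin N, j < i → v j = 0 := fun j hj => IHm j.val (him ▸ hj) j rfl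
      set s : Finset (Fin N) := Finset.univ.filter (fun j => i < j) with hs
      set p : 𝔽[X] := ∏ j ∈ s, (X - C (A i j)) with hpdef
      have hdeg : p.natDegree < N := by
        have h1 : p.natDegree = s.card := by
          rw [hpdef, Polynomial.natDegree_prod]
          · simp [Polynomial.natDegree_X_sub_C]
          · intro j _; exact Polynomial.X_sub_C_ne_zero _
        have hi : i ∉ s := by simp [hs]
        have h2 : s ⊆ Finset.univ.erase i := by
          intro j hj
          exact Finset.mem_erase.mpr ⟨fun e => hi (e ▸ hj), Finset.mem_univ j⟩
        have h3 : s.card ≤ N - 1 := by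
          have := Finset.card_le_card h2
          simpa [Finset.card_erase_of_mem, Finset.card_univ] using this
        have hN : 0 < N := i.pos
        omega
      have hsum := key i p hdeg
      have hsingle : ∑ j, p.eval (A i j) * v j = p.eval (A i i) * v i := by
        apply Finset.sum_eq_single
        · intro j _ hji
          rcases lt_or_gt_of_ne hji with hlt | hgt
          · rw [IH j hlt, mul_zero]
          · have : p.eval (A i j) = 0 := by
              rw [hpdef, Polynomial.eval_prod]
              apply Finset.prod_eq_zero (Finset.mem_filter.mpr ⟨Finset.mem_univ j, hgt⟩)
              simp
            rw [this, zero_mul]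
        · intro hi; exact absurd (Finset.mem_univ i) hi
      have hne : p.eval (A i i) ≠ 0 := by
        rw [hpdef, Polynomial.eval_prod]
        apply Finset.prod_ne_zero_iff.mpr
        intro j hj
        have hij : i < j := (Finset.mem_filter.mp hj).2
        simpa [sub_eq_zero] using h i j hij
      rw [hsingle] at hsum
      exact (mul_eq_zero.mp hsum).resolve_left hne
  funext i
  exact main i.val i rfl
end

section
/- Let 𝔽 be a field and u ∈ 𝔽^{1×N} a row vector. Let {I₁, ..., I_m} be the partition of {1,...,N} into level sets of u (indices with equal entries). Then the intersection over n ≥ 0 of the kernels of the entrywise powers u^{∘n} (viewed as linear functionals) equals the direct sum over j of the kernel of the all-ones functional on coordinates I_j, i.e., {v : Σ_{i ∈ I_j} v_i = 0 for all j}. -/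
/-!
Grouping `∑ i, u i ^ n * v i` by the values of `u` gives `∑ c ∈ u(Fin N), c ^ n * w c`, where
`w c` is the sum of `v` over the level set `u⁻¹(c)`. The values `c` are distinct, so their
Vandermonde matrix is invertible, and these sums vanish for all `n` iff `w = 0`.
-/

open scoped Classical

open Finset

theorem Finset.eq_zero_of_forall_sum_pow_mul_eq_zero {R : Type*} [CommRing R] [IsDomain R]
    {s : Finset R} {w : R → R} (h : ∀ n : ℕ, ∑ c ∈ s, c ^ n * w c = 0) {c : R} (hc : c ∈ s) :
    w c = 0 := by
  let e := s.equivFin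
  have hvanish : (fun k => w (e.symm k)) = 0 := by
    refine Matrix.eq_zero_of_forall_pow_sum_mul_pow_eq_zero (f := fun k => (e.symm k : R))
      (fun a b hab => e.symm.injective (Subtype.ext hab)) fun n => ?_
    rw [← h n, ← s.sum_coe_sort, ← e.symm.sum_comp]
    exact sum_congr rfl fun k _ => mul_comm _ _
  simpa using congr_fun hvanish (e ⟨c, hc⟩)

theorem Fintype.sum_comp_mul_eq_sum_image_mul_sum_fiber {ι α R : Type*} [Fintype ι]
    [CommSemiring R] (u : ι → α) (f : α → R) (v : ι → R) :
    ∑ i, f (u i) * v i = ∑ c ∈ univ.image u, f c * ∑ i with u i = c, v i := by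
  rw [← sum_fiberwise_of_maps_to fun i _ => mem_image_of_mem u (mem_univ i)]
  refine Finset.sum_congr rfl fun c _ => ?_
  rw [mul_sum]
  exact Finset.sum_congr rfl fun i hi => by rw [(mem_filter.mp hi).2]

/-- Let `𝔽` be a field and `u` a row vector of length `N`. A vector `v` is killed
by every entrywise power `u^{∘n}` (with `u^{∘0}` the all-ones row) if and only if
the coordinates of `v` sum to zero over each level set of `u`. -/
theorem stmt17 {𝔽 : Type*} [Field 𝔽] {N : ℕ} (u : Fin N → 𝔽) (v : Fin N → 𝔽) :
    (∀ n : ℕ, ∑ i, u i ^ n * v i = 0) ↔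
      ∀ i₀ : Fin N, ∑ i ∈ Finset.univ.filter (fun i => u i = u i₀), v i = 0 := by
  have hfiber (n : ℕ) := Fintype.sum_comp_mul_eq_sum_image_mul_sum_fiber u (· ^ n) v
  simp only [hfiber]
  constructor
  · intro h i₀
    exact eq_zero_of_forall_sum_pow_mul_eq_zero (w := fun c => ∑ i with u i = c, v i) h
      (mem_image_of_mem u (mem_univ i₀))
  · intro h n
    refine sum_eq_zero fun c hc => ?_
    obtain ⟨i₀, -, rfl⟩ := mem_image.mp hc
    rw [h i₀, mul_zero]
end
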